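/- Let A be a Hilbert algebra and n ∈ ℕ. If A satisfies the identity dₙ(x₀, …, xₙ) ≈ 1, then the poset of meet irreducible implicative filters of A contains no chain of n+1 strictly increasing elements F₀ ⊊ ⋯ ⊊ Fₙ (i.e., A has depth ≤ n). -/
import Mathlib


structure HilbertAlgebra (A : Type*) where
  imp : A → A → A
  one : A
  one_eq : ∀ a : A, imp a a = one
  K : ∀ a b : A, imp a (imp b a) = one
  S : ∀ a b c : A, imp (imp a (imp b c)) (imp (imp a b) (imp a c)) = one
  antisymm : ∀ a b : A, imp a b = one → imp b a = one → a = b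

namespace HilbertAlgebra

variable {A : Type*} (H : HilbertAlgebra A)

/-- The order of a Hilbert algebra: `a ≤ b` iff `a → b = 1`. -/
def le (a b : A) : Prop := H.imp a b = H.one

/-- Implicative filters: contain `1` and are closed under modus ponens. -/
def IsFilter (F : Set A) : Prop :=
  H.one ∈ F ∧ ∀ a b : A, a ∈ F → H.imp a b ∈ F → b ∈ F

/-- The implicative filter generated by a set `X`. -/
def Fg (X : Set A) : Set A := ⋂₀ {F : Set A | H.IsFilter F ∧ X ⊆ F}

/-- Meet irreducible implicative filters. -/
def MeetIrred (F : Set A) : Prop :=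
  H.IsFilter F ∧ F ≠ Set.univ ∧
    ∀ G K : Set A, H.IsFilter G → H.IsFilter K → F ⊂ G → F ⊂ K → F ≠ G ∩ K

/-- The terms `dₙ`. -/
def d : (n : ℕ) → (Fin (n + 1) → A) → A
  | 0, x => x 0
  | n + 1, x =>
    H.imp
      (H.imp (H.imp (x (Fin.last (n + 1))) (d n fun i => x i.castSucc))
        (x (Fin.last (n + 1))))
      (x (Fin.last (n + 1)))

end HilbertAlgebra

namespace HilbertAlgebra

variable {A : Type*} (H : HilbertAlgebra A)

lemma imp_one' (a : A) : H.imp a H.one = H.one := by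
  have h1 := H.S a a a
  rw [H.one_eq a] at h1
  rw [H.one_eq H.one] at h1
  exact H.antisymm _ _ h1 (H.K H.one a)

lemma one_le' {a : A} (h : H.imp H.one a = H.one) : a = H.one :=
  H.antisymm a H.one (H.imp_one' a) h

lemma one_imp' (b : A) : H.imp H.one b = b := by
  have h0 := H.S (H.imp H.one b) H.one b
  rw [H.one_eq (H.imp H.one b), H.imp_one' (H.imp H.one b)] at h0
  have h1 := H.one_le' (H.one_le' h0)
  exact H.antisymm (H.imp H.one b) b h1 (H.K b H.one)

lemma mp' {a b : A} (hab : H.imp a b = H.one) (ha : a = H.one) : b = H.one := by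
  rw [ha, H.one_imp'] at hab
  exact hab

lemma weaken' {a : A} (b : A) (ha : a = H.one) : H.imp b a = H.one :=
  H.mp' (H.K a b) ha

lemma s_rule {a b c : A} (h : H.imp a (H.imp b c) = H.one) :
    H.imp (H.imp a b) (H.imp a c) = H.one := H.mp' (H.S a b c) h

lemma trans_rule {a b c : A} (h1 : H.imp a b = H.one) (h2 : H.imp b c = H.one) :
    H.imp a c = H.one :=
  H.mp' (H.s_rule (H.weaken' a h2)) h1

/-- Prefixing: `(b→c) → ((a→b) → (a→c)) = 1`. -/
lemma thmB (a b c : A) :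
    H.imp (H.imp b c) (H.imp (H.imp a b) (H.imp a c)) = H.one := by
  have s1 := H.S a b c
  have s3 := H.weaken' (H.imp b c) s1
  have s4 := H.s_rule s3
  exact H.mp' s4 (H.K (H.imp b c) a)

lemma exch_rule {a b c : A} (h : H.imp a (H.imp b c) = H.one) :
    H.imp b (H.imp a c) = H.one :=
  H.trans_rule (H.K b a) (H.s_rule h)

/-- Suffixing: `(a→b) → ((b→c) → (a→c)) = 1`. -/
lemma thmB' (a b c : A) :
    H.imp (H.imp a b) (H.imp (H.imp b c) (H.imp a c)) = H.one :=
  H.exch_rule (H.thmB a b c)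

lemma filter_mp {F : Set A} (hF : H.IsFilter F) {a b : A} (ha : a ∈ F)
    (h : H.imp a b ∈ F) : b ∈ F := hF.2 a b ha h

lemma filter_thm {F : Set A} (hF : H.IsFilter F) {a : A} (h : a = H.one) : a ∈ F :=
  h ▸ hF.1

lemma filter_trans {F : Set A} (hF : H.IsFilter F) {a b c : A}
    (h1 : H.imp a b ∈ F) (h2 : H.imp b c ∈ F) : H.imp a c ∈ F :=
  H.filter_mp hF h1 (H.filter_mp hF h2 (H.filter_thm hF (H.thmB a b c)))

lemma subset_Fg (X : Set A) : X ⊆ H.Fg X := by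
  intro x hx T hT
  exact hT.2 hx

lemma Fg_isFilter (X : Set A) : H.IsFilter (H.Fg X) := by
  constructor
  · intro T hT
    exact hT.1.1
  · intro a b ha hb T hT
    exact hT.1.2 a b (ha T hT) (hb T hT)

/-- The deduction theorem direction we need:
elements of `Fg (F ∪ {a})` satisfy `a → z ∈ F`. -/
lemma mem_Fg_insert {F : Set A} (hF : H.IsFilter F) (a : A) {z : A}
    (hz : z ∈ H.Fg (F ∪ {a})) : H.imp a z ∈ F := by
  have hfil : H.IsFilter {x | H.imp a x ∈ F} := by
    constructor
    · exact H.filter_thm hF (H.imp_one' a)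
    · intro x y hx hxy
      have hs : H.imp (H.imp a (H.imp x y)) (H.imp (H.imp a x) (H.imp a y)) ∈ F :=
        H.filter_thm hF (H.S a x y)
      exact H.filter_mp hF hx (H.filter_mp hF hxy hs)
  have hsub : F ∪ {a} ⊆ {x | H.imp a x ∈ F} := by
    intro x hx
    rcases hx with hx | hx
    · exact H.filter_mp hF hx (H.filter_thm hF (H.K x a))
    · have hx' : x = a := hx
      subst hx'
      exact H.filter_thm hF (H.one_eq x)
  exact hz _ ⟨hfil, hsub⟩

/-- Key lemma: if `F` is meet irreducible, `F ⊊ G` with `G` a filter, and `D ∉ G`,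
then there is `z ∉ F` with `(z → D) → z ∈ F`. -/
lemma keyL {F G : Set A} (hF : H.MeetIrred F) (hG : H.IsFilter G) (hFG : F ⊂ G)
    {D : A} (hD : D ∉ G) :
    ∃ z : A, z ∉ F ∧ H.imp (H.imp z D) z ∈ F := by
  obtain ⟨a, haG, haF⟩ := Set.exists_of_ssubset hFG
  have haD : H.imp a D ∉ F := by
    intro h
    exact hD (H.filter_mp hG haG (hFG.1 h))
  set G₁ := H.Fg (F ∪ {a}) with hG₁
  set K₁ := H.Fg (F ∪ {H.imp a D}) with hK₁
  have hFsubG₁ : F ⊆ G₁ := fun x hx => H.subset_Fg _ (Or.inl hx)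
  have hFsubK₁ : F ⊆ K₁ := fun x hx => H.subset_Fg _ (Or.inl hx)
  have haG₁ : a ∈ G₁ := H.subset_Fg _ (Or.inr rfl)
  have haK₁ : H.imp a D ∈ K₁ := H.subset_Fg _ (Or.inr rfl)
  have hss1 : F ⊂ G₁ := (Set.ssubset_iff_of_subset hFsubG₁).2 ⟨a, haG₁, haF⟩
  have hss2 : F ⊂ K₁ := (Set.ssubset_iff_of_subset hFsubK₁).2 ⟨H.imp a D, haK₁, haD⟩
  have hne : F ≠ G₁ ∩ K₁ :=
    hF.2.2 G₁ K₁ (H.Fg_isFilter _) (H.Fg_isFilter _) hss1 hss2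
  have hsub : F ⊆ G₁ ∩ K₁ := fun x hx => ⟨hFsubG₁ hx, hFsubK₁ hx⟩
  obtain ⟨z, hzmem, hzF⟩ := Set.exists_of_ssubset (hsub.ssubset_of_ne hne)
  have haz : H.imp a z ∈ F := H.mem_Fg_insert hF.1 a hzmem.1
  have hadz : H.imp (H.imp a D) z ∈ F := H.mem_Fg_insert hF.1 (H.imp a D) hzmem.2
  refine ⟨z, hzF, ?_⟩
  have t1 : H.imp (H.imp z D) (H.imp a D) ∈ F :=
    H.filter_mp hF.1 haz (H.filter_thm hF.1 (H.thmB' a z D))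
  exact H.filter_trans hF.1 t1 hadz

lemma key : ∀ (n : ℕ) (F : Fin (n + 1) → Set A), (∀ i, H.MeetIrred (F i)) →
    (∀ i j : Fin (n + 1), i < j → F i ⊂ F j) → ∃ x : Fin (n + 1) → A, H.d n x ∉ F 0 := by
  intro n
  induction n with
  | zero =>
    intro F hirr _
    obtain ⟨a, ha⟩ : ∃ a, a ∉ F 0 := by
      by_contra h
      push_neg at h
      exact (hirr 0).2.1 (Set.eq_univ_of_forall h)
    exact ⟨fun _ => a, ha⟩
  | succ n ih =>
    intro F hirr hchain
    obtain ⟨x, hx⟩ := ih (fun i => F i.succ) (fun i => hirr i.succ)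
      (fun i j hij => hchain i.succ j.succ (by simpa using hij))
    have hx1 : H.d n x ∉ F 1 := by
      simpa using hx
    have hFG : F 0 ⊂ F 1 := hchain 0 1 (by
      simp [Fin.lt_def])
    obtain ⟨z, hzF, hz⟩ := H.keyL (hirr 0) (hirr 1).1 hFG hx1
    refine ⟨Fin.snoc x z, ?_⟩
    have h1 : (fun i : Fin (n + 1) => (Fin.snoc x z : Fin (n + 2) → A) i.castSucc) = x := by
      funext i
      simp
    have hd : H.d (n + 1) (Fin.snoc x z) =
        H.imp (H.imp (H.imp z (H.d n x)) z) z := by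
      show H.imp (H.imp (H.imp ((Fin.snoc x z : Fin (n + 2) → A) (Fin.last (n + 1)))
          (H.d n fun i => (Fin.snoc x z : Fin (n + 2) → A) i.castSucc))
          ((Fin.snoc x z : Fin (n + 2) → A) (Fin.last (n + 1))))
          ((Fin.snoc x z : Fin (n + 2) → A) (Fin.last (n + 1))) = _
      rw [h1, Fin.snoc_last]
    rw [hd]
    intro hmem
    exact hzF (H.filter_mp (hirr 0).1 hz hmem)

end HilbertAlgebra

/-- If `A` satisfies the identity `dₙ ≈ 1`, then `A` has depth at most `n`:
there is no strictly increasing chain `F₀ ⊊ ⋯ ⊊ Fₙ` of meet irreducible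
implicative filters. -/
theorem hilbert_depth_of_identity {A : Type*} (H : HilbertAlgebra A) (n : ℕ)
    (hid : ∀ x : Fin (n + 1) → A, H.d n x = H.one) :
    ¬ ∃ F : Fin (n + 1) → Set A,
        (∀ i, H.MeetIrred (F i)) ∧ ∀ i j : Fin (n + 1), i < j → F i ⊂ F j := by
  rintro ⟨F, hirr, hchain⟩
  obtain ⟨x, hx⟩ := H.key n F hirr hchain
  exact hx (H.filter_thm (hirr 0).1 (hid x))
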